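/- Quantum Cramer rule / orthogonality: in Mat_q(n), δ_{ik} det_q(A) = Σ_{j=1}^n (-q)^{j-i} a_{ij} Δ_q(k,j) for all i,k, where Δ_q(k,j) is the quantum minor obtained by deleting row k and column j of A. -/

import Mathlib

/-- The inversion number `ℓ(σ)` of a permutation. -/
def inversionNumber {n : ℕ} (σ : Equiv.Perm (Fin n)) : ℕ :=
  ((Finset.univ : Finset (Fin n × Fin n)).filter
    (fun p => p.1 < p.2 ∧ σ p.2 < σ p.1)).card

/-- The quantum minor `ξ^{g(1),…,g(r)}_{h(1),…,h(r)}`. -/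
def qMinor {F : Type*} [Field F] (q : F) {A : Type*} [Ring A] [Algebra F A]
    {n r : ℕ} (a : Fin n → Fin n → A) (g h : Fin r → Fin n) : A :=
  ∑ σ : Equiv.Perm (Fin r), (-q) ^ inversionNumber σ •
    ((List.finRange r).map (fun i => a (g i) (h (σ i)))).prod


open Finset

section lists
variable {A : Type*} [Monoid A] {n : ℕ}

lemma mem_take_finRange {m : ℕ} {x : Fin n} (hx : x ∈ (List.finRange n).take m) :
    (x : ℕ) < m := by
  obtain ⟨i, hi, hget⟩ := List.mem_iff_getElem.1 hx
  have hi' : i < m := by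
    have := hi; simp [List.length_take, List.length_finRange] at this; omega
  rw [List.getElem_take] at hget
  subst hget
  simpa [List.getElem_finRange] using hi'

lemma mem_drop_finRange {m : ℕ} {x : Fin n} (hx : x ∈ (List.finRange n).drop m) :
    m ≤ (x : ℕ) := by
  obtain ⟨i, hi, hget⟩ := List.mem_iff_getElem.1 hx
  rw [List.getElem_drop] at hget
  subst hget
  simp [List.getElem_finRange]

lemma finRange_split (t : Fin n) :
    List.finRange (n+1) = (List.finRange (n+1)).take (t : ℕ) ++
      t.castSucc :: t.succ :: (List.finRange (n+1)).drop ((t : ℕ)+2) := by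
  have h1 : ((t : ℕ)) < (List.finRange (n+1)).length := by
    rw [List.length_finRange]; omega
  have h2 : ((t : ℕ)+1) < (List.finRange (n+1)).length := by
    rw [List.length_finRange]; omega
  conv_lhs => rw [← List.take_append_drop (t : ℕ) (List.finRange (n+1))]
  rw [List.drop_eq_getElem_cons h1, List.drop_eq_getElem_cons h2]
  congr 1
  simp [List.getElem_finRange, Fin.ext_iff]

lemma prod_split (f : Fin (n+1) → A) (t : Fin n) :
    ((List.finRange (n+1)).map f).prod =
      (((List.finRange (n+1)).take (t : ℕ)).map f).prod *
        (f t.castSucc * (f t.succ *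
          (((List.finRange (n+1)).drop ((t : ℕ)+2)).map f).prod)) := by
  conv_lhs => rw [finRange_split t]
  simp [List.prod_append, mul_assoc]

end lists

section swaporder
variable {n : ℕ}

lemma swap_val (t : Fin n) (x : Fin (n+1)) :
    ((Equiv.swap t.castSucc t.succ x : Fin (n+1)) : ℕ) =
      if (x : ℕ) = (t : ℕ) then (t : ℕ)+1 else
        if (x : ℕ) = (t : ℕ)+1 then (t : ℕ) else (x : ℕ) := by
  rcases eq_or_ne x t.castSucc with h | h
  · subst h; simp [Equiv.swap_apply_left]
  rcases eq_or_ne x t.succ with h2 | h2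
  · subst h2
    rw [Equiv.swap_apply_right]
    have h1 : ((t.succ : Fin (n+1)) : ℕ) ≠ (t : ℕ) := by simp
    simp [h1]
  · rw [Equiv.swap_apply_of_ne_of_ne h h2]
    rw [Fin.ne_iff_vne] at h h2
    simp [Fin.val_succ] at h h2
    simp [h, h2]

lemma swap_lt_swap {t : Fin n} {x y : Fin (n+1)} (hxy : x < y)
    (hne : ¬(x = t.castSucc ∧ y = t.succ)) :
    Equiv.swap t.castSucc t.succ x < Equiv.swap t.castSucc t.succ y := by
  have hx := swap_val t x
  have hy := swap_val t y
  rw [Fin.lt_def] at hxy ⊢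
  rw [hx, hy]
  have : ¬((x:ℕ) = t ∧ (y:ℕ) = (t:ℕ)+1) := by
    intro ⟨h1, h2⟩
    exact hne ⟨by simp [Fin.ext_iff, h1], by simp [Fin.ext_iff, Fin.val_succ, h2]⟩
  split_ifs <;> omega

end swaporder
section invlemmas
variable {m : ℕ}

def invSet (σ : Equiv.Perm (Fin m)) : Finset (Fin m × Fin m) :=
  Finset.univ.filter (fun p => p.1 < p.2 ∧ σ p.2 < σ p.1)

lemma inversionNumber_eq (σ : Equiv.Perm (Fin m)) :
    inversionNumber σ = (invSet σ).card := rfl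

def Kset (σ : Equiv.Perm (Fin m)) : Finset (Fin m × Fin m) :=
  Finset.univ.filter (fun p => p.1 ≠ p.2 ∧ (p.1 < p.2 ↔ σ p.2 < σ p.1))

lemma card_Kset (σ : Equiv.Perm (Fin m)) : (Kset σ).card = 2 * inversionNumber σ := by
  have himg : Kset σ = invSet σ ∪ (invSet σ).image Prod.swap := by
    ext ⟨p1, p2⟩
    simp only [Kset, invSet, mem_filter, mem_union, mem_image, mem_univ, true_and, Prod.exists]
    constructor
    · rintro ⟨hne, hiff⟩
      rcases lt_trichotomy p1 p2 with h | h | h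
      · exact Or.inl ⟨h, hiff.1 h⟩
      · exact absurd h hne
      · refine Or.inr ⟨p2, p1, ⟨h, ?_⟩, rfl⟩
        have h2 : ¬ σ p2 < σ p1 := fun hc => (hiff.2 hc).asymm h
        have h3 : σ p1 ≠ σ p2 := fun hc => hne (σ.injective hc)
        exact lt_of_le_of_ne (le_of_not_gt h2) h3
    · rintro (⟨h1, h2⟩ | ⟨q1, q2, ⟨hq1, hq2⟩, heq⟩)
      · exact ⟨h1.ne, iff_of_true h1 h2⟩
      · rw [Prod.swap_prod_mk] at heq
        cases heq
        exact ⟨hq1.ne', iff_of_false (asymm hq1) (asymm hq2)⟩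
  have hdisj : Disjoint (invSet σ) ((invSet σ).image Prod.swap) := by
    rw [Finset.disjoint_left]
    rintro ⟨p1, p2⟩ hp hp2
    simp only [invSet, mem_filter, mem_univ, true_and, mem_image, Prod.exists] at hp hp2
    obtain ⟨q1, q2, ⟨hq1, _⟩, heq⟩ := hp2
    rw [Prod.swap_prod_mk] at heq
    cases heq
    exact hp.1.asymm hq1
  rw [himg, Finset.card_union_of_disjoint hdisj,
    Finset.card_image_of_injective _ Prod.swap_injective, inversionNumber_eq, two_mul]
end invlemmas

section mulswap
variable {n : ℕ}

lemma swap_lt_swap_iff {t : Fin n} {x y : Fin (n+1)} (hne : x ≠ y)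
    (h1 : ¬(x = t.castSucc ∧ y = t.succ)) (h2 : ¬(y = t.castSucc ∧ x = t.succ)) :
    Equiv.swap t.castSucc t.succ x < Equiv.swap t.castSucc t.succ y ↔ x < y := by
  constructor
  · intro h
    rcases lt_or_gt_of_ne hne with hl | hg
    · exact hl
    · exact absurd (swap_lt_swap hg h2) h.asymm
  · intro h
    exact swap_lt_swap h h1

lemma mem_Kset_mul_swap {t : Fin n} {σ : Equiv.Perm (Fin (n+1))}
    {p : Fin (n+1) × Fin (n+1)} (hp1 : p ≠ (t.castSucc, t.succ)) (hp2 : p ≠ (t.succ, t.castSucc)) :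
    p ∈ Kset (σ * Equiv.swap t.castSucc t.succ) ↔
      (Equiv.swap t.castSucc t.succ p.1, Equiv.swap t.castSucc t.succ p.2) ∈ Kset σ := by
  obtain ⟨p1, p2⟩ := p
  set w := Equiv.swap t.castSucc t.succ with hw
  simp only [Kset, mem_filter, mem_univ, true_and]
  simp only [Equiv.Perm.mul_apply]
  have hinj : w p1 ≠ w p2 ↔ p1 ≠ p2 := by
    constructor
    · intro h hc; exact h (by rw [hc])
    · intro h hc; exact h (w.injective hc)
  constructor
  · rintro ⟨hne, hiff⟩
    refine ⟨hinj.2 hne, ?_⟩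
    rw [swap_lt_swap_iff hne ?_ ?_]
    · exact hiff
    · intro ⟨ha, hb⟩; exact hp1 (by rw [ha, hb])
    · intro ⟨ha, hb⟩; exact hp2 (by rw [ha, hb])
  · rintro ⟨hne, hiff⟩
    have hne' : p1 ≠ p2 := hinj.1 hne
    refine ⟨hne', ?_⟩
    rw [← swap_lt_swap_iff hne' ?_ ?_]
    · exact hiff
    · intro ⟨ha, hb⟩; exact hp1 (by rw [ha, hb])
    · intro ⟨ha, hb⟩; exact hp2 (by rw [ha, hb])

lemma Kset_mul_swap (t : Fin n) (σ : Equiv.Perm (Fin (n+1)))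
    (h : σ t.castSucc < σ t.succ) :
    (Kset (σ * Equiv.swap t.castSucc t.succ)).card = (Kset σ).card + 2 := by
  set w := Equiv.swap t.castSucc t.succ with hw
  set ψ : Fin (n+1) × Fin (n+1) → Fin (n+1) × Fin (n+1) := fun p => (w p.1, w p.2) with hψ
  have hcs : t.castSucc ≠ t.succ := (Fin.castSucc_lt_succ (i := t)).ne
  have hwct : w t.castSucc = t.succ := Equiv.swap_apply_left _ _
  have hwst : w t.succ = t.castSucc := Equiv.swap_apply_right _ _
  have hψinv : ∀ p, ψ (ψ p) = p := by
    intro p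
    simp only [hψ]
    rw [hw]
    simp [Equiv.swap_apply_self]
  have hψinj : Function.Injective ψ := by
    intro p q hpq
    have := congrArg ψ hpq
    rwa [hψinv, hψinv] at this
  have hct_not : (t.castSucc, t.succ) ∉ Kset σ := by
    simp only [Kset, mem_filter, mem_univ, true_and, not_and]
    intro _
    rw [iff_iff_implies_and_implies]
    intro ⟨h1, _⟩
    exact absurd (h1 (Fin.castSucc_lt_succ (i := t))) (asymm h)
  have hst_not : (t.succ, t.castSucc) ∉ Kset σ := by
    simp only [Kset, mem_filter, mem_univ, true_and, not_and]
    intro _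
    rw [iff_iff_implies_and_implies]
    intro ⟨_, h2⟩
    exact absurd (h2 h) (Fin.castSucc_lt_succ (i := t)).asymm
  have hctm : (t.castSucc, t.succ) ∈ Kset (σ * w) := by
    simp only [Kset, mem_filter, mem_univ, true_and]
    simp only [Equiv.Perm.mul_apply, hwct, hwst]
    exact ⟨hcs, iff_of_true (Fin.castSucc_lt_succ (i := t)) h⟩
  have hstm : (t.succ, t.castSucc) ∈ Kset (σ * w) := by
    simp only [Kset, mem_filter, mem_univ, true_and]
    simp only [Equiv.Perm.mul_apply, hwct, hwst]
    exact ⟨hcs.symm, iff_of_false (Fin.castSucc_lt_succ (i := t)).asymm (asymm h)⟩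
  have himg : Kset (σ * w) = insert (t.castSucc, t.succ)
      (insert (t.succ, t.castSucc) ((Kset σ).image ψ)) := by
    ext p
    simp only [mem_insert, mem_image]
    constructor
    · intro hp
      by_cases h1 : p = (t.castSucc, t.succ)
      · exact Or.inl h1
      by_cases h2 : p = (t.succ, t.castSucc)
      · exact Or.inr (Or.inl h2)
      · refine Or.inr (Or.inr ⟨ψ p, ?_, hψinv p⟩)
        exact (mem_Kset_mul_swap h1 h2).1 hp
    · rintro (rfl | rfl | ⟨q, hq, rfl⟩)
      · exact hctm
      · exact hstm
      · have hq1 : q ≠ (t.castSucc, t.succ) := fun hc => hct_not (hc ▸ hq)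
        have hq2 : q ≠ (t.succ, t.castSucc) := fun hc => hst_not (hc ▸ hq)
        have hψq1 : ψ q ≠ (t.castSucc, t.succ) := by
          intro hc
          have := congrArg ψ hc
          rw [hψinv] at this
          apply hq2
          rw [this]
          simp [hψ, hwct, hwst]
        have hψq2 : ψ q ≠ (t.succ, t.castSucc) := by
          intro hc
          have := congrArg ψ hc
          rw [hψinv] at this
          apply hq1
          rw [this]
          simp [hψ, hwct, hwst]
        rw [mem_Kset_mul_swap hψq1 hψq2]
        rw [show (w (ψ q).1, w (ψ q).2) = ψ (ψ q) from rfl, hψinv]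
        exact hq
  rw [himg]
  rw [Finset.card_insert_of_notMem, Finset.card_insert_of_notMem,
    Finset.card_image_of_injective _ hψinj]
  · intro hc
    obtain ⟨q, hq, hqe⟩ := Finset.mem_image.1 hc
    have := congrArg ψ hqe
    rw [hψinv] at this
    rw [this] at hq
    revert hq
    simp only [hψ, hwct, hwst]
    exact hct_not
  · intro hc
    rcases Finset.mem_insert.1 hc with h1 | h1
    · exact hcs (congrArg Prod.fst h1)
    · obtain ⟨q, hq, hqe⟩ := Finset.mem_image.1 h1
      have := congrArg ψ hqe
      rw [hψinv] at this
      rw [this] at hq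
      revert hq
      simp only [hψ, hwct, hwst]
      exact hst_not

lemma inversionNumber_mul_swap (t : Fin n) (σ : Equiv.Perm (Fin (n+1)))
    (h : σ t.castSucc < σ t.succ) :
    inversionNumber (σ * Equiv.swap t.castSucc t.succ) = inversionNumber σ + 1 := by
  have h1 := card_Kset (σ * Equiv.swap t.castSucc t.succ)
  have h2 := card_Kset σ
  have h3 := Kset_mul_swap t σ h
  omega

end mulswap

section insertp
variable {n : ℕ}

/-- The permutation sending `0 ↦ j` and `succ t ↦ j.succAbove (τ t)`. -/
def insertPerm (j : Fin (n+1)) (τ : Equiv.Perm (Fin n)) : Equiv.Perm (Fin (n+1)) :=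
  (finSuccEquiv n).trans ((Equiv.optionCongr τ).trans (finSuccEquiv' j).symm)

@[simp] lemma insertPerm_zero (j : Fin (n+1)) (τ : Equiv.Perm (Fin n)) :
    insertPerm j τ 0 = j := by
  simp [insertPerm]

@[simp] lemma insertPerm_succ (j : Fin (n+1)) (τ : Equiv.Perm (Fin n)) (x : Fin n) :
    insertPerm j τ x.succ = j.succAbove (τ x) := by
  simp [insertPerm]

lemma insertPerm_bijective :
    Function.Bijective (fun p : Fin (n+1) × Equiv.Perm (Fin n) => insertPerm p.1 p.2) := by
  constructor
  · rintro ⟨j, τ⟩ ⟨j', τ'⟩ h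
    simp only at h
    have h0 : j = j' := by
      have := congrArg (fun σ : Equiv.Perm (Fin (n+1)) => σ 0) h
      simpa using this
    subst h0
    have : τ = τ' := by
      apply Equiv.ext
      intro x
      have := congrArg (fun σ : Equiv.Perm (Fin (n+1)) => σ x.succ) h
      simp only [insertPerm_succ] at this
      exact Fin.succAbove_right_injective this
    rw [this]
  · intro σ
    set j := σ 0 with hj
    set e : Option (Fin n) ≃ Option (Fin n) :=
      (finSuccEquiv n).symm.trans (σ.trans (finSuccEquiv' j)) with he
    have henone : e none = none := by
      simp [he, ← hj, finSuccEquiv'_at]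
    refine ⟨⟨j, e.removeNone⟩, ?_⟩
    simp only
    ext x
    rcases Fin.eq_zero_or_eq_succ x with rfl | ⟨y, rfl⟩
    · simp [hj]
    · rw [insertPerm_succ]
      have hne : σ y.succ ≠ j := fun hc => by
        have := σ.injective (hc.trans hj.symm ▸ hc)
        exact absurd (σ.injective (hc.trans hj)) (Fin.succ_ne_zero y)
      obtain ⟨z, hz⟩ := Fin.exists_succAbove_eq hne
      have hes : e (some y) = some z := by
        simp only [he, Equiv.trans_apply]
        rw [show (finSuccEquiv n).symm (some y) = y.succ by simp]
        rw [← hz, finSuccEquiv'_succAbove]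
      have := Equiv.removeNone_some e ⟨z, hes⟩
      rw [hes] at this
      have hrz : e.removeNone y = z := by
        injection this with hh
      rw [hrz, hz]

lemma inversionNumber_insertPerm (j : Fin (n+1)) (τ : Equiv.Perm (Fin n)) :
    inversionNumber (insertPerm j τ) = (j : ℕ) + inversionNumber τ := by
  rw [inversionNumber_eq]
  set σ := insertPerm j τ with hσ
  have hsplit := Finset.card_filter_add_card_filter_not
    (s := invSet σ) (p := fun p => p.1 = 0)
  have hc1 : ((invSet σ).filter (fun p => p.1 = 0)).card = (j : ℕ) := by
    have hbij : ((invSet σ).filter (fun p => p.1 = 0)).card =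
        ((Finset.univ : Finset (Fin n)).filter (fun x : Fin n => (x : ℕ) < (j : ℕ))).card := by
      apply Finset.card_bij (fun (p : Fin (n+1) × Fin (n+1))
          (hp : p ∈ (invSet σ).filter (fun p => p.1 = 0)) => τ ((p.2).pred (by
        have := Finset.mem_filter.1 hp
        have h1 := (Finset.mem_filter.1 this.1).2.1
        intro hc
        rw [this.2, hc] at h1
        exact lt_irrefl _ h1)))
      · rintro ⟨p1, p2⟩ hp
        have hmem := Finset.mem_filter.1 hp
        have h0 : p1 = 0 := hmem.2
        have hinv := (Finset.mem_filter.1 hmem.1).2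
        subst h0
        simp only [Finset.mem_filter, Finset.mem_univ, true_and]
        -- σ p2 < σ 0 = j ; p2 = succ (pred p2)
        have hp2ne : p2 ≠ 0 := by
          intro hc
          have := hinv.1
          rw [hc] at this
          exact absurd this (lt_irrefl _)
        have hps : p2 = (p2.pred hp2ne).succ := (Fin.succ_pred p2 hp2ne).symm
        have h2 : σ p2 < j := by
          have h2' := hinv.2
          rw [hσ] at h2'
          rwa [insertPerm_zero] at h2'
        rw [hps, hσ, insertPerm_succ] at h2
        have := (Fin.succAbove_lt_iff_castSucc_lt j _).1 h2
        simpa [Fin.lt_def] using this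
      · rintro ⟨p1, p2⟩ hp ⟨q1, q2⟩ hq hpq
        have hp' := Finset.mem_filter.1 hp
        have hq' := Finset.mem_filter.1 hq
        have h1 : p1 = 0 := hp'.2
        have h2 : q1 = 0 := hq'.2
        have := τ.injective hpq
        have h3 := congrArg Fin.succ this
        rw [Fin.succ_pred, Fin.succ_pred] at h3
        simp only at h3
        rw [Prod.mk.injEq]
        exact ⟨h1.trans h2.symm, h3⟩
      · intro y hy
        have hy' : (y : ℕ) < (j : ℕ) := (Finset.mem_filter.1 hy).2
        refine ⟨(0, (τ.symm y).succ), ?_, ?_⟩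
        · refine Finset.mem_filter.2 ⟨Finset.mem_filter.2 ⟨Finset.mem_univ _, ?_, ?_⟩, rfl⟩
          · exact Fin.succ_pos _
          · show σ (τ.symm y).succ < σ 0
            rw [hσ, insertPerm_succ, insertPerm_zero, Equiv.apply_symm_apply]
            rw [Fin.succAbove_lt_iff_castSucc_lt]
            simpa [Fin.lt_def] using hy'
        · simp
    have hcard2 : ((Finset.univ : Finset (Fin n)).filter
        (fun x : Fin n => (x : ℕ) < (j : ℕ))).card = (Finset.range (j : ℕ)).card := by
      apply Finset.card_bij (fun (x : Fin n)
        (_ : x ∈ (Finset.univ : Finset (Fin n)).filter (fun x : Fin n => (x : ℕ) < (j : ℕ))) =>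
        (x : ℕ))
      · intro x hx
        exact Finset.mem_range.2 (Finset.mem_filter.1 hx).2
      · intro x hx y hy hxy
        exact Fin.ext hxy
      · intro m hm
        have hm' := Finset.mem_range.1 hm
        have hmn : m < n := by
          have := j.isLt
          omega
        exact ⟨⟨m, hmn⟩, Finset.mem_filter.2 ⟨Finset.mem_univ _, hm'⟩, rfl⟩
    rw [hbij, hcard2, Finset.card_range]
  have hc2 : ((invSet σ).filter (fun p => ¬ p.1 = 0)).card = inversionNumber τ := by
    rw [inversionNumber_eq]
    have hpne2 : ∀ p : Fin (n+1) × Fin (n+1), p ∈ (invSet σ).filter (fun p => ¬ p.1 = 0) →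
        p.2 ≠ 0 := by
      intro p hp hc
      have hmem := Finset.mem_filter.1 hp
      have hlt := (Finset.mem_filter.1 hmem.1).2.1
      rw [hc] at hlt
      exact absurd hlt (Fin.not_lt.2 (Fin.zero_le _))
    apply Finset.card_bij (fun (p : Fin (n+1) × Fin (n+1))
      (hp : p ∈ (invSet σ).filter (fun p => ¬ p.1 = 0)) =>
      (p.1.pred ((Finset.mem_filter.1 hp).2), p.2.pred (hpne2 p hp)))
    · rintro ⟨p1, p2⟩ hp
      have hmem := Finset.mem_filter.1 hp
      have hinv := (Finset.mem_filter.1 hmem.1).2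
      have h1 : p1 ≠ 0 := hmem.2
      have h2 : p2 ≠ 0 := by
        intro hc
        rw [hc] at hinv
        exact absurd hinv.1 (Fin.not_lt.2 (Fin.zero_le _))
      simp only [invSet, Finset.mem_filter, Finset.mem_univ, true_and]
      constructor
      · rw [← Fin.succ_lt_succ_iff, Fin.succ_pred, Fin.succ_pred]
        exact hinv.1
      · have := hinv.2
        rw [show p1 = (p1.pred h1).succ from (Fin.succ_pred p1 h1).symm,
          show p2 = (p2.pred h2).succ from (Fin.succ_pred p2 h2).symm] at this
        rw [insertPerm_succ, insertPerm_succ] at this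
        exact (Fin.succAbove_lt_succAbove_iff).1 this
    · rintro ⟨p1, p2⟩ hp ⟨q1, q2⟩ hq hpq
      simp only [Prod.mk.injEq] at hpq
      have e1 := congrArg Fin.succ hpq.1
      have e2 := congrArg Fin.succ hpq.2
      rw [Fin.succ_pred, Fin.succ_pred] at e1
      rw [Fin.succ_pred, Fin.succ_pred] at e2
      simp [Prod.ext_iff, e1, e2]
    · rintro ⟨y1, y2⟩ hy
      have hinv := (Finset.mem_filter.1 hy).2
      refine ⟨(y1.succ, y2.succ), ?_, ?_⟩
      · simp only [Finset.mem_filter, invSet, Finset.mem_univ, true_and]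
        refine ⟨⟨?_, ?_⟩, Fin.succ_ne_zero _⟩
        · exact Fin.succ_lt_succ_iff.2 hinv.1
        · rw [insertPerm_succ, insertPerm_succ]
          exact Fin.succAbove_lt_succAbove_iff.2 hinv.2
      · simp
  omega

end insertp

section algebra
variable {F : Type*} [Field F] {q : F} {A : Type*} [Ring A] [Algebra F A]
  {n : ℕ} {a : Fin (n+1) → Fin (n+1) → A}

lemma map_take_mul_swap (r : Fin (n+1) → Fin (n+1)) (σ : Equiv.Perm (Fin (n+1))) (t : Fin n) :
    ((List.finRange (n+1)).take (t : ℕ)).map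
        (fun s => a (r s) ((σ * Equiv.swap t.castSucc t.succ) s)) =
      ((List.finRange (n+1)).take (t : ℕ)).map (fun s => a (r s) (σ s)) := by
  apply List.map_congr_left
  intro x hx
  have hxv := mem_take_finRange hx
  have h1 : x ≠ t.castSucc := by
    intro hc; subst hc
    simp only [Fin.coe_castSucc] at hxv
    omega
  have h2 : x ≠ t.succ := by
    intro hc; subst hc
    simp only [Fin.val_succ] at hxv
    omega
  rw [Equiv.Perm.mul_apply, Equiv.swap_apply_of_ne_of_ne h1 h2]

lemma map_drop_mul_swap (r : Fin (n+1) → Fin (n+1)) (σ : Equiv.Perm (Fin (n+1))) (t : Fin n) :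
    ((List.finRange (n+1)).drop ((t : ℕ)+2)).map
        (fun s => a (r s) ((σ * Equiv.swap t.castSucc t.succ) s)) =
      ((List.finRange (n+1)).drop ((t : ℕ)+2)).map (fun s => a (r s) (σ s)) := by
  apply List.map_congr_left
  intro x hx
  have hxv := mem_drop_finRange hx
  have h1 : x ≠ t.castSucc := by
    intro hc; subst hc
    simp only [Fin.coe_castSucc] at hxv
    omega
  have h2 : x ≠ t.succ := by
    intro hc; subst hc
    simp only [Fin.val_succ] at hxv
    omega
  rw [Equiv.Perm.mul_apply, Equiv.swap_apply_of_ne_of_ne h1 h2]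

lemma zero_adjacent (ha1 : ∀ i k l, k < l → a i k * a i l = q • (a i l * a i k))
    (r : Fin (n+1) → Fin (n+1)) (t : Fin n) (hr : r t.castSucc = r t.succ) :
    qMinor q a r id = 0 := by
  classical
  set w := Equiv.swap t.castSucc t.succ with hw
  have hww : ∀ π : Equiv.Perm (Fin (n+1)), (π * w) * w = π := by
    intro π; rw [mul_assoc, hw, Equiv.swap_mul_self, mul_one]
  set f : Equiv.Perm (Fin (n+1)) → A := fun σ =>
    (-q) ^ inversionNumber σ • ((List.finRange (n+1)).map (fun s => a (r s) (σ s))).prod with hf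
  have key : ∀ σ : Equiv.Perm (Fin (n+1)), σ t.castSucc < σ t.succ → f σ + f (σ * w) = 0 := by
    intro σ h
    have hl := inversionNumber_mul_swap t σ h
    have h1 : f σ = (-q) ^ inversionNumber σ •
        ((((List.finRange (n+1)).take (t : ℕ)).map (fun s => a (r s) (σ s))).prod *
          (a (r t.castSucc) (σ t.castSucc) * (a (r t.castSucc) (σ t.succ) *
            (((List.finRange (n+1)).drop ((t : ℕ)+2)).map (fun s => a (r s) (σ s))).prod))) := by
      simp only [hf]
      rw [prod_split (fun s => a (r s) (σ s)) t, hr]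
    have h2 : f (σ * w) = ((-q) ^ inversionNumber σ * (-q)) •
        ((((List.finRange (n+1)).take (t : ℕ)).map (fun s => a (r s) (σ s))).prod *
          (a (r t.castSucc) (σ t.succ) * (a (r t.castSucc) (σ t.castSucc) *
            (((List.finRange (n+1)).drop ((t : ℕ)+2)).map (fun s => a (r s) (σ s))).prod))) := by
      simp only [hf]
      rw [prod_split (fun s => a (r s) ((σ * w) s)) t]
      rw [show inversionNumber (σ * w) = inversionNumber σ + 1 from hl, pow_succ]
      rw [map_take_mul_swap r σ t, map_drop_mul_swap r σ t]
      simp only [Equiv.Perm.mul_apply, Equiv.swap_apply_left, Equiv.swap_apply_right, hr, hw]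
    set P := (((List.finRange (n+1)).take (t : ℕ)).map (fun s => a (r s) (σ s))).prod
    set S := (((List.finRange (n+1)).drop ((t : ℕ)+2)).map (fun s => a (r s) (σ s))).prod
    set u := r t.castSucc
    set c := σ t.castSucc
    set d := σ t.succ
    rw [h1, h2]
    have e1 : P * (a u c * (a u d * S)) = q • (P * (a u d * (a u c * S))) := by
      rw [← mul_assoc (a u c), ha1 u c d h]
      rw [smul_mul_assoc, mul_smul_comm, mul_assoc]
    rw [e1, smul_smul, ← add_smul]
    have hc0 : (-q) ^ inversionNumber σ * q + (-q) ^ inversionNumber σ * -q = 0 := by ring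
    rw [hc0, zero_smul]
  have hqm : qMinor q a r id = ∑ σ : Equiv.Perm (Fin (n+1)), f σ := by
    simp only [qMinor, hf, id_eq]
  rw [hqm]
  apply Finset.sum_ninvolution (g := fun σ => σ * w)
  · intro σ
    have hne : σ t.castSucc ≠ σ t.succ := fun hc =>
      (Fin.castSucc_lt_succ (i := t)).ne (σ.injective hc)
    rcases lt_or_gt_of_ne hne with hlt | hgt
    · exact key σ hlt
    · have h2 := key (σ * w) (by
        rw [Equiv.Perm.mul_apply, Equiv.Perm.mul_apply, hw, Equiv.swap_apply_left,
          Equiv.swap_apply_right]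
        exact hgt)
      rw [hww] at h2
      rw [add_comm]
      exact h2
  · intro σ _ hc
    have := congrArg (fun π : Equiv.Perm (Fin (n+1)) => π t.castSucc) hc
    simp only [Equiv.Perm.mul_apply, hw, Equiv.swap_apply_left] at this
    exact (Fin.castSucc_lt_succ (i := t)).ne' (σ.injective this)
  · intro σ
    exact Finset.mem_univ _
  · intro σ
    exact hww σ

lemma swap_adjacent (hq : q ≠ 0)
    (ha3 : ∀ i j k l, i < j → k < l → a j k * a i l = a i l * a j k)
    (ha4 : ∀ i j k l, i < j → k < l →
      a i k * a j l - a j l * a i k = (q - q⁻¹) • (a i l * a j k))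
    (r : Fin (n+1) → Fin (n+1)) (t : Fin n) (hlt : r t.castSucc < r t.succ) :
    qMinor q a (fun s => r (Equiv.swap t.castSucc t.succ s)) id = (-q) • qMinor q a r id := by
  classical
  set w := Equiv.swap t.castSucc t.succ with hw
  have hww : ∀ π : Equiv.Perm (Fin (n+1)), (π * w) * w = π := by
    intro π; rw [mul_assoc, hw, Equiv.swap_mul_self, mul_one]
  set f : Equiv.Perm (Fin (n+1)) → A := fun σ =>
    (-q) ^ inversionNumber σ • ((List.finRange (n+1)).map (fun s => a (r s) (σ s))).prod with hf
  set g : Equiv.Perm (Fin (n+1)) → A := fun σ =>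
    (-q) ^ inversionNumber σ •
      ((List.finRange (n+1)).map (fun s => a (r (w s)) (σ s))).prod with hg
  have hsum : qMinor q a (fun s => r (w s)) id = ∑ σ : Equiv.Perm (Fin (n+1)), g (σ * w) := by
    rw [show (∑ σ : Equiv.Perm (Fin (n+1)), g (σ * w)) = ∑ σ : Equiv.Perm (Fin (n+1)), g σ from
      Fintype.sum_equiv (Equiv.mulRight w) _ _ (fun σ => rfl)]
    simp only [qMinor, hg, id_eq]
  have hfsum : qMinor q a r id = ∑ σ : Equiv.Perm (Fin (n+1)), f σ := by
    simp only [qMinor, hf, id_eq]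
  have main : (∑ σ : Equiv.Perm (Fin (n+1)), g (σ * w)) +
      q • (∑ σ : Equiv.Perm (Fin (n+1)), f σ) = 0 := by
    rw [Finset.smul_sum, ← Finset.sum_add_distrib]
    set H : Equiv.Perm (Fin (n+1)) → A := fun σ => g (σ * w) + q • f σ with hH
    have key : ∀ σ : Equiv.Perm (Fin (n+1)), σ t.castSucc < σ t.succ →
        H σ + H (σ * w) = 0 := by
      intro σ h
      have hl := inversionNumber_mul_swap t σ h
      set u := r t.castSucc with hu
      set v := r t.succ with hv
      set c := σ t.castSucc with hc
      set d := σ t.succ with hd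
      set P := (((List.finRange (n+1)).take (t : ℕ)).map (fun s => a (r s) (σ s))).prod with hP
      set S := (((List.finRange (n+1)).drop ((t : ℕ)+2)).map (fun s => a (r s) (σ s))).prod with hS
      have hwct : w t.castSucc = t.succ := Equiv.swap_apply_left _ _
      have hwst : w t.succ = t.castSucc := Equiv.swap_apply_right _ _
      have htakeg : ((List.finRange (n+1)).take (t : ℕ)).map (fun s => a (r (w s)) (σ s)) =
          ((List.finRange (n+1)).take (t : ℕ)).map (fun s => a (r s) (σ s)) := by
        apply List.map_congr_left
        intro x hx
        have hxv := mem_take_finRange hx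
        have h1 : x ≠ t.castSucc := by
          intro hcx; subst hcx
          simp only [Fin.coe_castSucc] at hxv
          omega
        have h2 : x ≠ t.succ := by
          intro hcx; subst hcx
          simp only [Fin.val_succ] at hxv
          omega
        rw [hw, Equiv.swap_apply_of_ne_of_ne h1 h2]
      have hdropg : ((List.finRange (n+1)).drop ((t : ℕ)+2)).map (fun s => a (r (w s)) (σ s)) =
          ((List.finRange (n+1)).drop ((t : ℕ)+2)).map (fun s => a (r s) (σ s)) := by
        apply List.map_congr_left
        intro x hx
        have hxv := mem_drop_finRange hx
        have h1 : x ≠ t.castSucc := by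
          intro hcx; subst hcx
          simp only [Fin.coe_castSucc] at hxv
          omega
        have h2 : x ≠ t.succ := by
          intro hcx; subst hcx
          simp only [Fin.val_succ] at hxv
          omega
        rw [hw, Equiv.swap_apply_of_ne_of_ne h1 h2]
      have e1 : f σ = (-q) ^ inversionNumber σ • (P * (a u c * (a v d * S))) := by
        simp only [hf]
        rw [prod_split (fun s => a (r s) (σ s)) t]
      have e2 : f (σ * w) = ((-q) ^ inversionNumber σ * (-q)) •
          (P * (a u d * (a v c * S))) := by
        simp only [hf]
        rw [prod_split (fun s => a (r s) ((σ * w) s)) t]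
        rw [show inversionNumber (σ * w) = inversionNumber σ + 1 from hl, pow_succ]
        rw [map_take_mul_swap r σ t, map_drop_mul_swap r σ t]
        simp only [Equiv.Perm.mul_apply, Equiv.swap_apply_left, Equiv.swap_apply_right, hw]
        rfl
      have e3 : g σ = (-q) ^ inversionNumber σ • (P * (a v c * (a u d * S))) := by
        simp only [hg]
        rw [prod_split (fun s => a (r (w s)) (σ s)) t]
        rw [htakeg, hdropg, hwct, hwst]
      have e4 : g (σ * w) = ((-q) ^ inversionNumber σ * (-q)) •
          (P * (a v d * (a u c * S))) := by
        simp only [hg]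
        rw [prod_split (fun s => a (r (w s)) ((σ * w) s)) t]
        rw [show inversionNumber (σ * w) = inversionNumber σ + 1 from hl, pow_succ]
        have htakeg2 : ((List.finRange (n+1)).take (t : ℕ)).map
            (fun s => a (r (w s)) ((σ * w) s)) =
            ((List.finRange (n+1)).take (t : ℕ)).map (fun s => a (r s) (σ s)) := by
          rw [map_take_mul_swap (fun s => r (w s)) σ t]
          exact htakeg
        have hdropg2 : ((List.finRange (n+1)).drop ((t : ℕ)+2)).map
            (fun s => a (r (w s)) ((σ * w) s)) =
            ((List.finRange (n+1)).drop ((t : ℕ)+2)).map (fun s => a (r s) (σ s)) := by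
          rw [map_drop_mul_swap (fun s => r (w s)) σ t]
          exact hdropg
        rw [htakeg2, hdropg2]
        simp only [Equiv.Perm.mul_apply, Equiv.swap_apply_left, Equiv.swap_apply_right, hw]
        rfl
      have hg2 : H σ + H (σ * w) = g (σ * w) + g σ + (q • f σ + q • f (σ * w)) := by
        simp only [hH]
        rw [hww]
        abel
      rw [hg2, e1, e2, e3, e4]
      -- relations
      have h3 : a v c * a u d = a u d * a v c := ha3 u v c d hlt h
      have h4 : a v d * a u c = a u c * a v d - (q - q⁻¹) • (a u d * a v c) := by
        rw [← ha4 u v c d hlt h, sub_sub_cancel]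
      have h3' : P * (a v c * (a u d * S)) = P * (a u d * (a v c * S)) := by
        rw [← mul_assoc (a v c), h3, mul_assoc]
      have h4' : P * (a v d * (a u c * S)) = P * (a u c * (a v d * S))
          - (q - q⁻¹) • (P * (a u d * (a v c * S))) := by
        rw [← mul_assoc (a v d), h4, sub_mul, smul_mul_assoc, mul_sub, mul_assoc, mul_assoc,
          mul_smul_comm]
      rw [h3', h4']
      have hqq : q * q⁻¹ = 1 := mul_inv_cancel₀ hq
      match_scalars
      · ring
      · linear_combination (-(q ^ inversionNumber σ * (-1 : F) ^ inversionNumber σ)) * hqq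
    apply Finset.sum_ninvolution (fun σ => σ * w)
    · intro σ
      have hne : σ t.castSucc ≠ σ t.succ := fun hc =>
        (Fin.castSucc_lt_succ (i := t)).ne (σ.injective hc)
      rcases lt_or_gt_of_ne hne with hl2 | hgt
      · exact key σ hl2
      · have h2 := key (σ * w) (by
          rw [Equiv.Perm.mul_apply, Equiv.Perm.mul_apply, hw, Equiv.swap_apply_left,
            Equiv.swap_apply_right]
          exact hgt)
        rw [hww] at h2
        rw [add_comm]
        exact h2
    · intro σ _ hc
      have := congrArg (fun π : Equiv.Perm (Fin (n+1)) => π t.castSucc) hc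
      simp only [Equiv.Perm.mul_apply, hw, Equiv.swap_apply_left] at this
      exact (Fin.castSucc_lt_succ (i := t)).ne' (σ.injective this)
    · intro σ
      exact Finset.mem_univ _
    · intro σ
      exact hww σ
  rw [hsum, hfsum]
  have heq := eq_neg_of_add_eq_zero_left main
  rw [neg_smul]
  exact heq


lemma laplace_row_zero (b : Fin (n+1) → Fin (n+1) → A) :
    (∑ σ : Equiv.Perm (Fin (n+1)), (-q) ^ inversionNumber σ •
      ((List.finRange (n+1)).map (fun s => b s (σ s))).prod)
    = ∑ j : Fin (n+1), (-q) ^ (j : ℕ) •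
        (b 0 j * qMinor q b Fin.succ (Fin.succAbove j)) := by
  classical
  rw [← Fintype.sum_bijective (fun p : Fin (n+1) × Equiv.Perm (Fin n) => insertPerm p.1 p.2)
    insertPerm_bijective
    (fun p => (-q) ^ inversionNumber (insertPerm p.1 p.2) •
      ((List.finRange (n+1)).map (fun s => b s (insertPerm p.1 p.2 s))).prod)
    (fun σ => (-q) ^ inversionNumber σ •
      ((List.finRange (n+1)).map (fun s => b s (σ s))).prod)
    (fun p => rfl)]
  rw [Fintype.sum_prod_type]
  apply Finset.sum_congr rfl
  intro j _
  have hprod : ∀ τ : Equiv.Perm (Fin n),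
      ((List.finRange (n+1)).map (fun s => b s (insertPerm j τ s))).prod =
      b 0 j * ((List.finRange n).map (fun x => b x.succ (j.succAbove (τ x)))).prod := by
    intro τ
    rw [List.finRange_succ]
    rw [List.map_cons, List.prod_cons, insertPerm_zero, List.map_map]
    have hcomp : (fun s => b s (insertPerm j τ s)) ∘ Fin.succ =
        fun x => b x.succ (j.succAbove (τ x)) := by
      funext x
      simp [Function.comp, insertPerm_succ]
    rw [hcomp]
  have hminor : qMinor q b Fin.succ (Fin.succAbove j) =
      ∑ τ : Equiv.Perm (Fin n), (-q) ^ inversionNumber τ •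
        ((List.finRange n).map (fun x => b x.succ (j.succAbove (τ x)))).prod := rfl
  rw [hminor, Finset.mul_sum, Finset.smul_sum]
  apply Finset.sum_congr rfl
  intro τ _
  rw [hprod τ, inversionNumber_insertPerm, pow_add, mul_smul, mul_smul_comm]

/-- the cycle function moving position `m` to position `0`. -/
def cyc {n : ℕ} (m : ℕ) : Fin (n+1) → Fin (n+1) := fun s =>
  if (s : ℕ) < m then s + 1 else if (s : ℕ) = m then 0 else s

lemma cyc_val {n : ℕ} (m : ℕ) (hm : m ≤ n) (s : Fin (n+1)) :
    ((cyc m s : Fin (n+1)) : ℕ) =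
      if (s : ℕ) < m then (s : ℕ)+1 else if (s : ℕ) = m then 0 else (s : ℕ) := by
  simp only [cyc]
  split_ifs with h1 h2
  · apply Fin.val_add_one_of_lt
    rw [Fin.lt_def, Fin.val_last]
    omega
  · simp
  · rfl

lemma cyc_zero {n : ℕ} : (cyc 0 : Fin (n+1) → Fin (n+1)) = id := by
  funext s
  apply Fin.ext
  rw [cyc_val 0 (Nat.zero_le n), id_eq]
  split_ifs <;> omega

lemma cyc_succ_swap {n : ℕ} (m : ℕ) (hm : m < n) :
    (fun s : Fin (n+1) => cyc (m+1) (Equiv.swap (Fin.castSucc ⟨m, hm⟩) (Fin.succ ⟨m, hm⟩) s))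
      = cyc m := by
  funext s
  apply Fin.ext
  have h1 := swap_val (⟨m, hm⟩ : Fin n) s
  have hs := s.isLt
  rw [cyc_val (m+1) hm (Equiv.swap (Fin.castSucc ⟨m, hm⟩) (Fin.succ ⟨m, hm⟩) s),
    cyc_val m (Nat.le_of_lt hm) s, h1]
  simp only
  split_ifs <;> omega


lemma cases_succAbove_val {n : ℕ} (c p : Fin (n+1)) (x : Fin (n+1)) :
    ((Fin.cases c (Fin.succAbove p) x : Fin (n+1)) : ℕ) =
      if (x : ℕ) = 0 then (c : ℕ)
      else if (x : ℕ) - 1 < (p : ℕ) then (x : ℕ) - 1 else (x : ℕ) := by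
  rcases Fin.eq_zero_or_eq_succ x with rfl | ⟨y, rfl⟩
  · simp
  · rw [Fin.cases_succ]
    have hys : ((y.succ : Fin (n+1)) : ℕ) = (y : ℕ) + 1 := rfl
    rcases lt_or_ge (Fin.castSucc y) p with hlt | hle
    · rw [Fin.succAbove_of_castSucc_lt _ _ hlt]
      rw [Fin.lt_def] at hlt
      simp only [Fin.coe_castSucc, Fin.val_succ] at hlt ⊢
      split_ifs <;> first | omega | simp_all
    · rw [Fin.succAbove_of_le_castSucc _ _ hle]
      rw [Fin.le_def] at hle
      simp only [Fin.coe_castSucc, Fin.val_succ] at hle ⊢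
      split_ifs <;> first | omega | simp_all

lemma move (hq : q ≠ 0)
    (ha3 : ∀ i j k l, i < j → k < l → a j k * a i l = a i l * a j k)
    (ha4 : ∀ i j k l, i < j → k < l →
      a i k * a j l - a j l * a i k = (q - q⁻¹) • (a i l * a j k))
    (g : Fin (n+1) → Fin (n+1)) (m : ℕ) (hm : m ≤ n)
    (h : ∀ s : Fin (n+1), 0 < (s : ℕ) → (s : ℕ) ≤ m → g s < g 0) :
    qMinor q a g id = (-q) ^ m • qMinor q a (fun s => g (cyc m s)) id := by
  induction m with
  | zero =>
    simp only [cyc_zero, id_eq, pow_zero, one_smul]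
  | succ m ih =>
    have hmn : m < n := Nat.lt_of_succ_le hm
    rw [ih (Nat.le_of_lt hmn) (fun s hs1 hs2 => h s hs1 (Nat.le_succ_of_le hs2))]
    have hcond : (fun s => g (cyc (m+1) s)) (Fin.castSucc ⟨m, hmn⟩) <
        (fun s => g (cyc (m+1) s)) (Fin.succ ⟨m, hmn⟩) := by
      simp only
      have h1 : cyc (m+1) (Fin.castSucc (⟨m, hmn⟩ : Fin n)) =
          (Fin.succ (⟨m, hmn⟩ : Fin n) : Fin (n+1)) := by
        apply Fin.ext
        rw [cyc_val (m+1) hmn]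
        simp [Fin.val_succ]
      have h2 : cyc (m+1) (Fin.succ (⟨m, hmn⟩ : Fin n)) = (0 : Fin (n+1)) := by
        apply Fin.ext
        rw [cyc_val (m+1) hmn]
        simp [Fin.val_succ]
      rw [h1, h2]
      exact h (Fin.succ ⟨m, hmn⟩) (by simp [Fin.val_succ]) (by simp [Fin.val_succ])
    have hswap := swap_adjacent hq ha3 ha4 (fun s => g (cyc (m+1) s)) ⟨m, hmn⟩ hcond
    have hfun : (fun s => (fun s' => g (cyc (m+1) s'))
        (Equiv.swap (Fin.castSucc ⟨m, hmn⟩) (Fin.succ ⟨m, hmn⟩) s)) =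
        fun s => g (cyc m s) := by
      funext s
      exact congrArg g (congrFun (cyc_succ_swap m hmn) s)
    rw [hfun] at hswap
    rw [hswap, smul_smul, ← pow_succ]

end algebra


/-- quantum Cramer rule / orthogonality relations:
`δ_{ik} det_q(A) = Σ_j (-q)^{j-i} a_{ij} Δ_q(k,j)`, where `Δ_q(k,j)` is the quantum
minor obtained by deleting row `k` and column `j`. -/
theorem quantum_cramer_rule
    (F : Type*) [Field F] (q : F) (hq : q ≠ 0) (n : ℕ)
    (A : Type*) [Ring A] [Algebra F A]
    (a : Fin (n + 1) → Fin (n + 1) → A)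
    (ha1 : ∀ i k l, k < l → a i k * a i l = q • (a i l * a i k))
    (ha2 : ∀ i j k, i < j → a i k * a j k = q • (a j k * a i k))
    (ha3 : ∀ i j k l, i < j → k < l → a j k * a i l = a i l * a j k)
    (ha4 : ∀ i j k l, i < j → k < l →
      a i k * a j l - a j l * a i k = (q - q⁻¹) • (a i l * a j k))
    (i k : Fin (n + 1)) :
    (if i = k then
        ∑ σ : Equiv.Perm (Fin (n + 1)), (-q) ^ inversionNumber σ •
          ((List.finRange (n + 1)).map (fun t => a t (σ t))).prod
      else 0)
      = ∑ j : Fin (n + 1), (-q) ^ ((j : ℤ) - (i : ℤ)) •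
          (a i j * qMinor q a (Fin.succAbove k) (Fin.succAbove j)) := by
  classical
  have hnq : (-q : F) ≠ 0 := neg_ne_zero.mpr hq
  set r : Fin (n+1) → Fin (n+1) := Fin.cases i (Fin.succAbove k) with hrdef
  have hminor : ∀ j : Fin (n+1), qMinor q (fun s x => a (r s) x) Fin.succ (Fin.succAbove j)
      = qMinor q a (Fin.succAbove k) (Fin.succAbove j) := by
    intro j
    simp only [qMinor, hrdef, Fin.cases_succ]
  have hb0 : ∀ j : Fin (n+1), (fun s x => a (r s) x) 0 j = a i j := by
    intro j
    simp only [hrdef, Fin.cases_zero]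
  have hcoe : ∀ m : Fin (n+1), (m : ℤ) = ((m : ℕ) : ℤ) := fun m => rfl
  have hRHS : (∑ j : Fin (n+1), (-q) ^ ((j : ℤ) - (i : ℤ)) •
      (a i j * qMinor q a (Fin.succAbove k) (Fin.succAbove j)))
      = ((-q) ^ (i : ℕ))⁻¹ • qMinor q a r id := by
    have hqm : qMinor q a r id = ∑ σ : Equiv.Perm (Fin (n+1)), (-q) ^ inversionNumber σ •
        ((List.finRange (n+1)).map (fun s => (fun s x => a (r s) x) s (σ s))).prod := by
      simp only [qMinor, id_eq]
    rw [hqm, laplace_row_zero (q := q) (fun s x => a (r s) x), Finset.smul_sum]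
    apply Finset.sum_congr rfl
    intro j _
    rw [hminor j]
    simp only [hrdef, Fin.cases_zero]
    rw [smul_smul]
    congr 1
    rw [zpow_sub₀ hnq, div_eq_mul_inv, mul_comm, hcoe i, hcoe j, zpow_natCast, zpow_natCast]
  rw [hRHS]
  by_cases hik : i = k
  · subst hik
    rw [if_pos rfl]
    have hcond : ∀ s : Fin (n+1), 0 < (s : ℕ) → (s : ℕ) ≤ (i : ℕ) → r s < r 0 := by
      intro s hs1 hs2
      have hv1 := cases_succAbove_val i i s
      have hv2 := cases_succAbove_val i i (0 : Fin (n+1))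
      rw [Fin.lt_def]
      simp only [hrdef]
      rw [hv1, hv2]
      simp only [Fin.val_zero]
      split_ifs <;> first | omega | simp_all
    have hmove := move hq ha3 ha4 r (i : ℕ) (Nat.lt_succ_iff.mp i.isLt) hcond
    have hid : (fun s => r (cyc (i : ℕ) s)) = id := by
      funext s
      apply Fin.ext
      have hv := cases_succAbove_val i i (cyc (i : ℕ) s)
      simp only [hrdef, id_eq]
      rw [hv, cyc_val (i : ℕ) (Nat.lt_succ_iff.mp i.isLt) s]
      have hs := s.isLt
      have hi := i.isLt
      split_ifs <;> first | omega | simp_all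
    rw [hmove, hid, inv_smul_smul₀ (pow_ne_zero _ hnq)]
    simp only [qMinor, id_eq]
  · rw [if_neg hik]
    have hikv : (i : ℕ) ≠ (k : ℕ) := fun hc => hik (Fin.ext hc)
    have hkn : (k : ℕ) ≤ n := Nat.lt_succ_iff.mp k.isLt
    have hin : (i : ℕ) ≤ n := Nat.lt_succ_iff.mp i.isLt
    have hex : ∃ p : ℕ, p < n ∧
        ((i : ℕ) < (k : ℕ) ∧ p = (i : ℕ) ∨ (k : ℕ) < (i : ℕ) ∧ p + 1 = (i : ℕ)) := by
      rcases Nat.lt_or_ge (i : ℕ) (k : ℕ) with hc | hc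
      · exact ⟨(i : ℕ), by omega, Or.inl ⟨hc, rfl⟩⟩
      · have hc2 : (k : ℕ) < (i : ℕ) := by omega
        exact ⟨(i : ℕ) - 1, by omega, Or.inr ⟨hc2, by omega⟩⟩
    obtain ⟨p, hpn, hpcase⟩ := hex
    have hcond : ∀ s : Fin (n+1), 0 < (s : ℕ) → (s : ℕ) ≤ p → r s < r 0 := by
      intro s hs1 hs2
      have hv1 := cases_succAbove_val i k s
      have hv2 := cases_succAbove_val i k (0 : Fin (n+1))
      rw [Fin.lt_def]
      simp only [hrdef]
      rw [hv1, hv2]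
      simp only [Fin.val_zero]
      split_ifs <;> first | omega | simp_all
    have hmove := move hq ha3 ha4 r p (Nat.le_of_lt hpn) hcond
    have hzero : qMinor q a (fun s => r (cyc p s)) id = 0 := by
      apply zero_adjacent ha1 _ ⟨p, hpn⟩
      show r (cyc p (Fin.castSucc (⟨p, hpn⟩ : Fin n))) = r (cyc p (Fin.succ (⟨p, hpn⟩ : Fin n)))
      apply Fin.ext
      have hv1 := cases_succAbove_val i k (cyc p (Fin.castSucc (⟨p, hpn⟩ : Fin n)))
      have hv2 := cases_succAbove_val i k (cyc p (Fin.succ (⟨p, hpn⟩ : Fin n)))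
      simp only [hrdef]
      rw [hv1, hv2, cyc_val p (Nat.le_of_lt hpn), cyc_val p (Nat.le_of_lt hpn)]
      simp only [Fin.coe_castSucc, Fin.val_succ]
      split_ifs <;> first | omega | simp_all
    rw [hmove, hzero, smul_zero, smul_zero]
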